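/- (Lemma 6, first part: T_GS maps V_GS into V.) For every v ∈ ℝ^S with T_GS v ≤ v, the vector u = T_GS v satisfies Tu ≤ u; that is, T_GS(V_GS) ⊆ V. -/
import Mathlib


noncomputable def Tval {S : Type*} [Fintype S] {A : S → Type*}
    [∀ i, Fintype (A i)] [∀ i, Nonempty (A i)]
    (r : ∀ i, A i → ℝ) (p : ∀ i, A i → S → ℝ) (lam : ℝ) (v : S → ℝ) (i : S) : ℝ :=
  Finset.univ.sup' Finset.univ_nonempty fun a : A i =>
    r i a + lam * ∑ j, p i a j * v j

noncomputable def TGS {S : Type*} [Fintype S] [LinearOrder S] {A : S → Type*}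
    [∀ i, Fintype (A i)] [∀ i, Nonempty (A i)]
    (r : ∀ i, A i → ℝ) (p : ∀ i, A i → S → ℝ) (lam : ℝ) (v : S → ℝ) (i : S) : ℝ :=
  Finset.univ.sup' Finset.univ_nonempty fun a : A i =>
    r i a + lam * (∑ j ∈ (Finset.univ.filter fun j => j < i).attach,
        p i a j.1 * TGS r p lam v j.1)
      + lam * ∑ j ∈ Finset.univ.filter fun j => i ≤ j, p i a j * v j
termination_by (Finset.univ.filter fun j => j < i).card
decreasing_by
  have hj : j.1 < i := (Finset.mem_filter.mp j.2).2
  apply Finset.card_lt_card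
  rw [Finset.ssubset_iff_of_subset]
  · exact ⟨j.1, Finset.mem_filter.mpr ⟨Finset.mem_univ _, hj⟩, by simp⟩
  · intro x hx
    exact Finset.mem_filter.mpr ⟨Finset.mem_univ _, (Finset.mem_filter.mp hx).2.trans hj⟩

theorem TGS_maps_VGS_into_V {S : Type*} [Fintype S] [Nonempty S] [LinearOrder S] {A : S → Type*}
    [∀ i, Fintype (A i)] [∀ i, Nonempty (A i)]
    (r : ∀ i, A i → ℝ) (p : ∀ i, A i → S → ℝ) (lam : ℝ)
    (hp : ∀ i (a : A i) (j : S), 0 ≤ p i a j)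
    (hp1 : ∀ i (a : A i), ∑ j, p i a j = 1)
    (hlam0 : 0 ≤ lam) (hlam1 : lam < 1) :
    ∀ v : S → ℝ, (∀ i, TGS r p lam v i ≤ v i) →
      ∀ i, Tval r p lam (TGS r p lam v) i ≤ TGS r p lam v i := by
  intro v hv i
  unfold Tval
  apply Finset.sup'_le
  intro a _
  have hsplit : ∑ j, p i a j * TGS r p lam v j
      = (∑ j ∈ Finset.univ.filter fun j => j < i, p i a j * TGS r p lam v j)
        + ∑ j ∈ Finset.univ.filter fun j => i ≤ j, p i a j * TGS r p lam v j := by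
    rw [← Finset.sum_filter_add_sum_filter_not Finset.univ (fun j => j < i)]
    congr 1
    apply Finset.sum_congr _ (fun _ _ => rfl)
    apply Finset.filter_congr
    intro j _
    simp [not_lt]
  have h2 : lam * ∑ j ∈ Finset.univ.filter (fun j => i ≤ j), p i a j * TGS r p lam v j
      ≤ lam * ∑ j ∈ Finset.univ.filter (fun j => i ≤ j), p i a j * v j :=
    mul_le_mul_of_nonneg_left
      (Finset.sum_le_sum fun j _ => mul_le_mul_of_nonneg_left (hv j) (hp i a j)) hlam0
  have key : r i a + lam * ∑ j, p i a j * TGS r p lam v j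
      ≤ r i a + lam * (∑ j ∈ (Finset.univ.filter fun j => j < i).attach,
          p i a j.1 * TGS r p lam v j.1)
        + lam * ∑ j ∈ Finset.univ.filter fun j => i ≤ j, p i a j * v j := by
    rw [hsplit, Finset.sum_attach _ (fun j => p i a j * TGS r p lam v j), mul_add]
    linarith
  refine key.trans ?_
  conv_rhs => rw [TGS]
  exact Finset.le_sup' (fun a : A i => r i a + lam * ∑ j ∈ (Finset.univ.filter fun j => j < i).attach,
      p i a j.1 * TGS r p lam v j.1
    + lam * ∑ j ∈ Finset.univ.filter fun j => i ≤ j, p i a j * v j) (Finset.mem_univ a)
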